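/- Under the mixture observation model, the scatter matrix satisfies λ_min(E_{x∼p}[z(x)_S z(x)_Sᵀ]) ≥ 1−ν; consequently λ_max(E_{x∼p}[z(x)_S z(x)_Sᵀ]) ≥ 1−ν. -/

import Mathlib

/- Common setup: linear influence games (LIGs), the PSNE set, the noisy
observation model, feature vectors, the logistic loss and its gradient,
population/sample Hessian and scatter matrices, and Rayleigh-quotient
encodings of eigenvalue bounds for (symmetric) submatrices.

Joint actions in `{-1,+1}^n` are modeled as `Fin n → Bool` via the sign map
`sgn` (`true ↦ +1`, `false ↦ -1`).  For player `i`, the feature vector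
`z_i(x) = (x_i · x_{-i}, x_i)` and the parameter vector `v_i = (w_{i,-i}, -b_i)`
are indexed by `Fin n`, with the bias coordinate placed at index `i`
(a fixed permutation of the paper's coordinate ordering), so that
`v_i ⬝ᵥ z_i(x) = x_i (∑_{j ≠ i} W i j · x_j - b i)` is player `i`'s payoff. -/

open Matrix Finset

noncomputable section

/-- Sign of a Boolean action: `true ↦ +1`, `false ↦ -1`. -/
def sgn (a : Bool) : ℝ := if a then 1 else -1

/-- Payoff of player `i` at joint action `x` in the LIG `(W, b)`:
`x_i (∑_{j ≠ i} W i j · x_j - b i)`. -/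
def payoff {n : ℕ} (W : Matrix (Fin n) (Fin n) ℝ) (b : Fin n → ℝ)
    (i : Fin n) (x : Fin n → Bool) : ℝ :=
  sgn (x i) * ((∑ j ∈ Finset.univ.erase i, W i j * sgn (x j)) - b i)

/-- The pure-strategy Nash equilibria set `NE(W, b)`. -/
def NEset {n : ℕ} (W : Matrix (Fin n) (Fin n) ℝ) (b : Fin n → ℝ) :
    Finset (Fin n → Bool) :=
  @Finset.filter _ (fun x => ∀ i, 0 ≤ payoff W b i x) (Classical.decPred _)
    Finset.univ

/-- The observation distribution
`p(x) = q·1[x ∈ NE]/|NE| + (1-q)·1[x ∉ NE]/(2^n - |NE|)`. -/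
def pObs {n : ℕ} (q : ℝ) (NE : Finset (Fin n → Bool)) (x : Fin n → Bool) : ℝ :=
  if x ∈ NE then q / (NE.card : ℝ)
  else (1 - q) / ((2 : ℝ) ^ n - (NE.card : ℝ))

/-- The mixture coefficient `ν = (q - c/2^n)/(1 - c/2^n)`, where `c = |NE*|`. -/
def mixCoef (n : ℕ) (q : ℝ) (c : ℕ) : ℝ :=
  (q - (c : ℝ) / (2 : ℝ) ^ n) / (1 - (c : ℝ) / (2 : ℝ) ^ n)

/-- Feature vector `z_i(x) = (x_i·x_{-i}, x_i)` (bias coordinate at index `i`). -/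
def zvec {n : ℕ} (i : Fin n) (x : Fin n → Bool) : Fin n → ℝ :=
  fun j => if j = i then sgn (x i) else sgn (x i) * sgn (x j)

/-- Parameter vector `v_i = (w_{i,-i}, -b_i)` (bias coordinate at index `i`). -/
def vvec {n : ℕ} (W : Matrix (Fin n) (Fin n) ℝ) (b : Fin n → ℝ) (i : Fin n) :
    Fin n → ℝ :=
  fun j => if j = i then -b i else W i j

/-- Support `S = {j : v_j ≠ 0}` of a vector. -/
def supp {n : ℕ} (v : Fin n → ℝ) : Finset (Fin n) :=
  @Finset.filter _ (fun j => v j ≠ 0) (Classical.decPred _) Finset.univ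

/-- `η(s) = 1/(e^{s/2} + e^{-s/2})²`. -/
def eta (s : ℝ) : ℝ := 1 / (Real.exp (s / 2) + Real.exp (-s / 2)) ^ 2

/-- Logistic loss `ℓ_i(v, D) = (1/m) ∑_l log(1 + exp(-vᵀ z_i(x⁽ˡ⁾)))`. -/
def loss {n m : ℕ} (i : Fin n) (v : Fin n → ℝ)
    (D : Fin m → (Fin n → Bool)) : ℝ :=
  (1 / (m : ℝ)) * ∑ l, Real.log (1 + Real.exp (-(v ⬝ᵥ zvec i (D l))))

/-- Gradient of the logistic loss,
`∇ℓ(v, D) = (1/m) ∑_l (-z⁽ˡ⁾)/(1 + exp(vᵀ z⁽ˡ⁾))`. -/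
def gradLoss {n m : ℕ} (i : Fin n) (v : Fin n → ℝ)
    (D : Fin m → (Fin n → Bool)) : Fin n → ℝ :=
  fun j => (1 / (m : ℝ)) *
    ∑ l, -(zvec i (D l) j) / (1 + Real.exp (v ⬝ᵥ zvec i (D l)))

/-- ℓ1 norm `‖v‖₁ = ∑_j |v_j|`. -/
def norm1 {n : ℕ} (v : Fin n → ℝ) : ℝ := ∑ j, |v j|

/-- Quadratic form `yᵀ M y`. -/
def quadForm {n : ℕ} (M : Matrix (Fin n) (Fin n) ℝ) (y : Fin n → ℝ) : ℝ :=
  y ⬝ᵥ M.mulVec y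

/-- `λ_min(M_SS) ≥ c`, encoded via the Rayleigh quotient over vectors
supported on `S` (exactly equivalent for symmetric `M`). -/
def minEigSubGE {n : ℕ} (M : Matrix (Fin n) (Fin n) ℝ) (S : Finset (Fin n))
    (c : ℝ) : Prop :=
  ∀ y : Fin n → ℝ, (∀ j ∉ S, y j = 0) → c * (∑ j, y j ^ 2) ≤ quadForm M y

/-- `λ_min(M_SS) > c` (Rayleigh form; equivalent for symmetric `M` since the
unit sphere of the finite-dimensional subspace is compact). -/
def minEigSubGT {n : ℕ} (M : Matrix (Fin n) (Fin n) ℝ) (S : Finset (Fin n))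
    (c : ℝ) : Prop :=
  ∀ y : Fin n → ℝ, (∀ j ∉ S, y j = 0) → y ≠ 0 →
    c * (∑ j, y j ^ 2) < quadForm M y

/-- `λ_max(M_SS) ≤ c` (Rayleigh form). -/
def maxEigSubLE {n : ℕ} (M : Matrix (Fin n) (Fin n) ℝ) (S : Finset (Fin n))
    (c : ℝ) : Prop :=
  ∀ y : Fin n → ℝ, (∀ j ∉ S, y j = 0) → quadForm M y ≤ c * (∑ j, y j ^ 2)

/-- `λ_max(M_SS) < c` (Rayleigh form). -/
def maxEigSubLT {n : ℕ} (M : Matrix (Fin n) (Fin n) ℝ) (S : Finset (Fin n))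
    (c : ℝ) : Prop :=
  ∀ y : Fin n → ℝ, (∀ j ∉ S, y j = 0) → y ≠ 0 →
    quadForm M y < c * (∑ j, y j ^ 2)

/-- `λ_max(M_SS) ≥ c` (Rayleigh form: some nonzero supported vector attains it). -/
def maxEigSubGE {n : ℕ} (M : Matrix (Fin n) (Fin n) ℝ) (S : Finset (Fin n))
    (c : ℝ) : Prop :=
  ∃ y : Fin n → ℝ, (∀ j ∉ S, y j = 0) ∧ y ≠ 0 ∧
    c * (∑ j, y j ^ 2) ≤ quadForm M y

/-- Population Hessian `H*_i = E_{x∼p}[η(vᵀz_i(x)) z_i(x) z_i(x)ᵀ]`. -/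
def popHess {n : ℕ} (q : ℝ) (NE : Finset (Fin n → Bool)) (i : Fin n)
    (v : Fin n → ℝ) : Matrix (Fin n) (Fin n) ℝ :=
  ∑ x : Fin n → Bool,
    (pObs q NE x * eta (v ⬝ᵥ zvec i x)) • vecMulVec (zvec i x) (zvec i x)

/-- Population scatter matrix `E_{x∼p}[z_i(x) z_i(x)ᵀ]`. -/
def popScatter {n : ℕ} (q : ℝ) (NE : Finset (Fin n → Bool)) (i : Fin n) :
    Matrix (Fin n) (Fin n) ℝ :=
  ∑ x : Fin n → Bool, pObs q NE x • vecMulVec (zvec i x) (zvec i x)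

/-- Sample Hessian `H^m = (1/m) ∑_l η(vᵀz⁽ˡ⁾) z⁽ˡ⁾ (z⁽ˡ⁾)ᵀ`. -/
def sampleHess {n m : ℕ} (i : Fin n) (v : Fin n → ℝ)
    (D : Fin m → (Fin n → Bool)) : Matrix (Fin n) (Fin n) ℝ :=
  (1 / (m : ℝ)) •
    ∑ l, eta (v ⬝ᵥ zvec i (D l)) • vecMulVec (zvec i (D l)) (zvec i (D l))

/-- Sample scatter matrix `(1/m) ∑_l z⁽ˡ⁾ (z⁽ˡ⁾)ᵀ`. -/
def sampleScatter {n m : ℕ} (i : Fin n) (D : Fin m → (Fin n → Bool)) :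
    Matrix (Fin n) (Fin n) ℝ :=
  (1 / (m : ℝ)) • ∑ l, vecMulVec (zvec i (D l)) (zvec i (D l))

/-- Probability of the event `E` under `m` i.i.d. draws from `p`. -/
def iidProb {X : Type*} [Fintype X] (p : X → ℝ) (m : ℕ)
    (E : Set (Fin m → X)) : ℝ :=
  ∑ D : Fin m → X, E.indicator (fun D => ∏ l, p (D l)) D

/-- `ρ` is the minimum payoff over the PSNE set of `(W, b)`. -/
def isMinPayoff {n : ℕ} (W : Matrix (Fin n) (Fin n) ℝ) (b : Fin n → ℝ)
    (ρ : ℝ) : Prop :=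
  IsLeast {r : ℝ | ∃ x ∈ NEset W b, ∃ i, r = payoff W b i x} ρ


/-! The population distribution dominates the uniform distribution scaled by
`t = (1 - q)/(2^n - |NE*|)`: off `NE*` it equals `t`, and on `NE*` it is `q/|NE*| ≥ t` because
`q ≥ |NE*|/2^n`. Under the uniform distribution the features are orthogonal: flipping a
coordinate `a ≠ i` of `x` negates `z_a(x)` and fixes every other `z_k(x)`, so
`∑ₓ z(x) z(x)ᵀ = 2^n • 1`. Hence the scatter matrix is at least `t 2^n • 1 = (1 - ν) • 1`. -/

lemma sgn_mul_self (a : Bool) : sgn a * sgn a = 1 := by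
  cases a <;> simp [sgn]

lemma sgn_not (a : Bool) : sgn (!a) = -sgn a := by
  cases a <;> simp [sgn]

section FlipAt

variable {ι : Type*} [DecidableEq ι]

def flipAt (a : ι) (x : ι → Bool) : ι → Bool := Function.update x a (!x a)

lemma flipAt_apply_self (a : ι) (x : ι → Bool) : flipAt a x a = !x a :=
  Function.update_self ..

lemma flipAt_apply_of_ne {a k : ι} (hk : k ≠ a) (x : ι → Bool) : flipAt a x k = x k :=
  Function.update_of_ne hk ..

lemma flipAt_flipAt (a : ι) (x : ι → Bool) : flipAt a (flipAt a x) = x := by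
  simp [flipAt, Function.update_idem]

lemma flipAt_ne (a : ι) (x : ι → Bool) : flipAt a x ≠ x := fun h => by
  simpa [flipAt_apply_self] using congrFun h a

lemma sum_eq_zero_of_flipAt_eq_neg [Fintype ι] {M : Type*} [AddCommGroup M] (a : ι)
    (f : (ι → Bool) → M) (hf : ∀ x, f (flipAt a x) = -f x) : ∑ x, f x = 0 :=
  Finset.sum_ninvolution (flipAt a) (fun x => by rw [hf, add_neg_cancel])
    (fun x _ => flipAt_ne a x) (fun _ => mem_univ _) (flipAt_flipAt a)

end FlipAt

section Features

variable {n : ℕ} (i : Fin n)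

lemma zvec_mul_self (x : Fin n → Bool) (j : Fin n) : zvec i x j * zvec i x j = 1 := by
  unfold zvec
  split_ifs
  · exact sgn_mul_self _
  · rw [mul_mul_mul_comm, sgn_mul_self, sgn_mul_self, one_mul]

lemma zvec_flipAt_self {a : Fin n} (ha : a ≠ i) (x : Fin n → Bool) :
    zvec i (flipAt a x) a = -zvec i x a := by
  simp only [zvec, if_neg ha, flipAt_apply_self, flipAt_apply_of_ne ha.symm, sgn_not, mul_neg]

lemma zvec_flipAt_of_ne {a k : Fin n} (ha : a ≠ i) (hk : k ≠ a) (x : Fin n → Bool) :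
    zvec i (flipAt a x) k = zvec i x k := by
  simp only [zvec, flipAt_apply_of_ne hk, flipAt_apply_of_ne ha.symm]

lemma sum_zvec_mul_zvec_of_ne {j k : Fin n} (hjk : j ≠ k) :
    ∑ x, zvec i x j * zvec i x k = 0 := by
  wlog hj : j ≠ i generalizing j k
  · simp_rw [mul_comm (zvec i _ j)]
    exact this hjk.symm (not_not.mp hj ▸ hjk.symm)
  exact sum_eq_zero_of_flipAt_eq_neg j _ fun x => by
    rw [zvec_flipAt_self i hj, zvec_flipAt_of_ne i hj hjk.symm, neg_mul]

lemma sum_vecMulVec_zvec : ∑ x, vecMulVec (zvec i x) (zvec i x) = (2 : ℝ) ^ n • 1 := by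
  ext j k
  simp only [Matrix.sum_apply, vecMulVec_apply, Matrix.smul_apply, one_apply, smul_eq_mul]
  split_ifs with hjk
  · subst hjk
    simp [zvec_mul_self]
  · simp [sum_zvec_mul_zvec_of_ne i hjk]

end Features

lemma dotProduct_sum_smul_vecMulVec_mulVec {ι m R : Type*} [Fintype ι] [Fintype m] [CommRing R]
    (w : ι → R) (u : ι → m → R) (y : m → R) :
    y ⬝ᵥ (∑ x, w x • vecMulVec (u x) (u x)) *ᵥ y = ∑ x, w x * (y ⬝ᵥ u x) ^ 2 := by
  simp only [sum_mulVec, dotProduct_sum, smul_mulVec, vecMulVec_mulVec, dotProduct_smul,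
    op_smul_eq_smul, smul_eq_mul]
  refine Finset.sum_congr rfl fun x _ => ?_
  rw [dotProduct_comm (u x) y]
  ring

lemma sum_dotProduct_zvec_sq {n : ℕ} (i : Fin n) (y : Fin n → ℝ) :
    ∑ x, (y ⬝ᵥ zvec i x) ^ 2 = (2 : ℝ) ^ n * ∑ j, y j ^ 2 := by
  have h := dotProduct_sum_smul_vecMulVec_mulVec (fun _ => (1 : ℝ)) (zvec i) y
  simp only [one_smul, one_mul, sum_vecMulVec_zvec, smul_mulVec, one_mulVec,
    dotProduct_smul, smul_eq_mul] at h
  rw [← h, dotProduct]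
  simp [sq]

lemma mul_sum_sq_le_quadForm_popScatter {n : ℕ} {q t : ℝ} {NE : Finset (Fin n → Bool)}
    (ht : ∀ x, t ≤ pObs q NE x) (i : Fin n) (y : Fin n → ℝ) :
    t * 2 ^ n * ∑ j, y j ^ 2 ≤ quadForm (popScatter q NE i) y := by
  rw [quadForm, popScatter, dotProduct_sum_smul_vecMulVec_mulVec, mul_assoc,
    ← sum_dotProduct_zvec_sq i, Finset.mul_sum]
  gcongr with x
  exact ht x

lemma div_le_pObs {n : ℕ} {q : ℝ} {NE : Finset (Fin n → Bool)} (hcard : (NE.card : ℝ) < 2 ^ n)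
    (hq : NE.card / 2 ^ n ≤ q) (x : Fin n → Bool) :
    (1 - q) / (2 ^ n - NE.card) ≤ pObs q NE x := by
  unfold pObs
  split_ifs with hx
  · have hcard_pos : (0 : ℝ) < NE.card := by exact_mod_cast card_pos.mpr ⟨x, hx⟩
    have hq' : (NE.card : ℝ) ≤ q * 2 ^ n := (div_le_iff₀ (by positivity)).mp hq
    rw [div_le_div_iff₀ (sub_pos.mpr hcard) hcard_pos]
    linarith
  · exact le_rfl

lemma one_sub_mixCoef {n c : ℕ} (q : ℝ) (hc : (c : ℝ) ≠ 2 ^ n) :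
    1 - mixCoef n q c = (1 - q) / (2 ^ n - c) * 2 ^ n := by
  have h2n : (2 : ℝ) ^ n ≠ 0 := by positivity
  have hsub : (2 : ℝ) ^ n - c ≠ 0 := sub_ne_zero.mpr hc.symm
  rw [mixCoef, one_sub_div h2n, div_div_eq_mul_div]
  field_simp
  ring

lemma maxEigSubGE_of_minEigSubGE {n : ℕ} {M : Matrix (Fin n) (Fin n) ℝ} {S : Finset (Fin n)}
    {c : ℝ} (h : minEigSubGE M S c) (hS : S.Nonempty) : maxEigSubGE M S c := by
  obtain ⟨j, hj⟩ := hS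
  have hsupp : ∀ k ∉ S, (Pi.single j 1 : Fin n → ℝ) k = 0 := fun k hk =>
    Pi.single_eq_of_ne (ne_of_mem_of_not_mem hj hk).symm _
  exact ⟨Pi.single j 1, hsupp, Pi.single_ne_zero_iff.mpr one_ne_zero, h _ hsupp⟩

theorem population_scatter_min_eig_general
    (n : ℕ) (W : Matrix (Fin n) (Fin n) ℝ) (b : Fin n → ℝ)
    (q : ℝ)
    (hNE2 : (NEset W b).card < 2 ^ n)
    (hq1 : ((NEset W b).card : ℝ) / (2 : ℝ) ^ n < q)
    (i : Fin n) (hS : (supp (vvec W b i)).Nonempty) :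
    minEigSubGE (popScatter q (NEset W b) i) (supp (vvec W b i))
        (1 - mixCoef n q (NEset W b).card) ∧
      maxEigSubGE (popScatter q (NEset W b) i) (supp (vvec W b i))
        (1 - mixCoef n q (NEset W b).card) := by
  have hcard : ((NEset W b).card : ℝ) < 2 ^ n := by exact_mod_cast hNE2
  have hmin : minEigSubGE (popScatter q (NEset W b) i) (supp (vvec W b i))
      (1 - mixCoef n q (NEset W b).card) := fun y _ => by
    rw [one_sub_mixCoef q hcard.ne]
    exact mul_sum_sq_le_quadForm_popScatter (div_le_pObs hcard hq1.le) i y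
  exact ⟨hmin, maxEigSubGE_of_minEigSubGE hmin hS⟩

/-- under the mixture observation model,
`λ_min(E_{x∼p}[z_S z_Sᵀ]) ≥ 1-ν`, and consequently
`λ_max(E_{x∼p}[z_S z_Sᵀ]) ≥ 1-ν`.  (The nonemptiness of `S` is presupposed by
the statement, which speaks of eigenvalues of the `S × S` scatter matrix.) -/
theorem population_scatter_min_eig
    (n : ℕ) (W : Matrix (Fin n) (Fin n) ℝ) (b : Fin n → ℝ)
    (hdiag : ∀ i, W i i = 0) (q : ℝ)
    (hNE1 : 1 ≤ (NEset W b).card) (hNE2 : (NEset W b).card < 2 ^ n)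
    (hq1 : ((NEset W b).card : ℝ) / (2 : ℝ) ^ n < q) (hq2 : q < 1)
    (i : Fin n) (hS : (supp (vvec W b i)).Nonempty) :
    minEigSubGE (popScatter q (NEset W b) i) (supp (vvec W b i))
        (1 - mixCoef n q (NEset W b).card) ∧
      maxEigSubGE (popScatter q (NEset W b) i) (supp (vvec W b i))
        (1 - mixCoef n q (NEset W b).card) :=
  population_scatter_min_eig_general n W b q hNE2 hq1 i hS
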